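/- (Theorem 4.1, viscous boundary-layer set for a convex scalar conservation law.) Let f : ℝ → ℝ be C² with f''(u) > 0 for every u and let u_* satisfy f'(u_*) = 0. For u_B ∈ ℝ define E^layer(u_B) = { v_∞ ∈ ℝ : there exists a differentiable v : [0,∞) → ℝ with v(0) = u_B, v'(y) = f(v(y)) − f(v_∞) for all y ≥ 0, and v(y) → v_∞ as y → ∞ }. If u_B ≤ u_*, then E^layer(u_B) = (−∞, u_*]. If u_B > u_* and u_B^* < u_* satisfies f(u_B^*) = f(u_B), then E^layer(u_B) = (−∞, u_B^*) ∪ {u_B}. -/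

import Mathlib

/-!
Solutions of the autonomous equation `v' = f v - f ℓ` with `f` locally Lipschitz are unique, so
a solution never reaches a zero of `f - f ℓ` it did not start at. Hence `ℓ > u_B` is an
admissible limit exactly when `f > f ℓ` on `[u_B, ℓ)`, and, after the reflection `x ↦ -x`,
`ℓ < u_B` exactly when `f < f ℓ` on `(ℓ, u_B]`. The solution is obtained by inverting the time
map `w ↦ ∫_{u_B}^w dt / (f t - f ℓ)`, which diverges at `ℓ` since `f t - f ℓ = O(ℓ - t)`.
For `f` strictly decreasing on `(-∞, u_*]` and strictly increasing on `[u_*, ∞)` these sign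
conditions give the two sets of the theorem.
-/

open Filter

/-- The set of admissible boundary values based on the boundary layer equation
of the vanishing viscosity method: `v_∞` is admissible iff the problem
`v' = f(v) − f(v_∞)`, `v(0) = u_B`, `v(∞) = v_∞` has a solution on `[0,∞)`. -/
def viscousLayerSet (f : ℝ → ℝ) (uB : ℝ) : Set ℝ :=
  { vinf : ℝ | ∃ v : ℝ → ℝ, v 0 = uB ∧
      (∀ y : ℝ, 0 ≤ y → HasDerivAt v (f (v y) - f vinf) y) ∧
      Tendsto v atTop (nhds vinf) }

open Set Topology

section AutonomousODE

variable {g v : ℝ → ℝ} {e : ℝ}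

theorem eq_iff_eq_of_hasDerivAt (hg : LocallyLipschitz g)
    (hv : ∀ y, 0 ≤ y → HasDerivAt v (g (v y)) y) (he : g e = 0) {s t : ℝ} (hs : 0 ≤ s)
    (hst : s ≤ t) : v s = e ↔ v t = e := by
  have hvc : ContinuousOn v (Icc s t) := fun y hy =>
    (hv y (hs.trans hy.1)).continuousAt.continuousWithinAt
  set S := insert e (v '' Icc s t)
  obtain ⟨K, hK⟩ := hg.locallyLipschitzOn.exists_lipschitzOnWith_of_compact
    ((isCompact_Icc.image_of_continuousOn hvc).insert e)
  have hvS : ∀ y ∈ Icc s t, v y ∈ S := fun y hy => mem_insert_of_mem _ (mem_image_of_mem v hy)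
  have hconst : ∀ y (u : Set ℝ), HasDerivWithinAt (fun _ => e) (g e) u y := fun y u => by
    simpa [he] using hasDerivWithinAt_const y u e
  constructor
  · intro h
    exact ODE_solution_unique_of_mem_Icc_right (v := fun _ => g) (s := fun _ => S)
      (fun _ _ => hK) hvc (fun y hy => (hv y (hs.trans hy.1)).hasDerivWithinAt)
      (fun y hy => hvS y (Ico_subset_Icc_self hy)) continuousOn_const (fun y _ => hconst y _)
      (fun _ _ => mem_insert e _) h ⟨hst, le_rfl⟩
  · intro h
    exact ODE_solution_unique_of_mem_Icc_left (v := fun _ => g) (s := fun _ => S)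
      (fun _ _ => hK) hvc (fun y hy => (hv y (hs.trans hy.1.le)).hasDerivWithinAt)
      (fun y hy => hvS y (Ioc_subset_Icc_self hy)) continuousOn_const (fun y _ => hconst y _)
      (fun _ _ => mem_insert e _) h ⟨le_rfl, hst⟩

theorem le_of_hasDerivAt_of_le (hg : LocallyLipschitz g)
    (hv : ∀ y, 0 ≤ y → HasDerivAt v (g (v y)) y) (he : g e = 0) (h0 : v 0 ≤ e) {y : ℝ}
    (hy : 0 ≤ y) : v y ≤ e := by
  by_contra! hlt
  have hvc : ContinuousOn v (Icc 0 y) := fun t ht => (hv t ht.1).continuousAt.continuousWithinAt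
  obtain ⟨t, ht, hte⟩ := intermediate_value_Icc hy hvc ⟨h0, hlt.le⟩
  exact hlt.ne' ((eq_iff_eq_of_hasDerivAt hg hv he ht.1 ht.2).1 hte)

theorem lt_of_hasDerivAt_of_lt (hg : LocallyLipschitz g)
    (hv : ∀ y, 0 ≤ y → HasDerivAt v (g (v y)) y) (he : g e = 0) (h0 : v 0 < e) {y : ℝ}
    (hy : 0 ≤ y) : v y < e :=
  (le_of_hasDerivAt_of_le hg hv he h0.le hy).lt_of_ne fun h =>
    h0.ne ((eq_iff_eq_of_hasDerivAt hg hv he le_rfl hy).2 h)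

theorem not_tendsto_of_lt_of_neg {ℓ c : ℝ} (hv : ∀ y, 0 ≤ y → HasDerivAt v (g (v y)) y)
    (hlt : ∀ y, 0 ≤ y → v y < ℓ) (hc : c < ℓ) (hneg : ∀ w ∈ Ioo c ℓ, g w < 0) :
    ¬ Tendsto v atTop (𝓝 ℓ) := by
  intro hvt
  obtain ⟨y₁, hy₁⟩ := eventually_atTop.1 (hvt.eventually (eventually_gt_nhds hc))
  set y₀ := max y₁ 0
  have hanti : AntitoneOn v (Ici y₀) := by
    refine antitoneOn_of_hasDerivWithinAt_nonpos (f' := fun y => g (v y)) (convex_Ici y₀)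
      (fun y hy => ?_) (fun y hy => ?_) fun y hy => ?_
    · exact (hv y ((le_max_right _ _).trans hy)).continuousAt.continuousWithinAt
    · rw [interior_Ici] at hy
      exact (hv y ((le_max_right _ _).trans hy.le)).hasDerivWithinAt
    · rw [interior_Ici] at hy
      have hy0 : 0 ≤ y := (le_max_right _ _).trans hy.le
      exact (hneg _ ⟨hy₁ y ((le_max_left _ _).trans hy.le), hlt y hy0⟩).le
  have : ℓ ≤ v y₀ := le_of_tendsto hvt <| (eventually_ge_atTop y₀).mono fun y hy =>
    hanti (mem_Ici.2 le_rfl) hy hy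
  exact (hlt y₀ (le_max_right _ _)).not_ge this

end AutonomousODE

theorem exists_hasDerivAt_inverse {G G' : ℝ → ℝ} {a b c : ℝ} (hca : c < a) (hab : a < b)
    (hG : ∀ w ∈ Ioo c b, HasDerivAt G (G' w) w) (hG' : ∀ w ∈ Ioo c b, 0 < G' w)
    (htop : Tendsto G (𝓝[<] b) atTop) :
    ∃ v : ℝ → ℝ, v (G a) = a ∧ (∀ y, G a ≤ y → HasDerivAt v (G' (v y))⁻¹ y) ∧
      Tendsto v atTop (𝓝 b) := by
  have hGc : ContinuousOn G (Ioo c b) := fun w hw => (hG w hw).continuousAt.continuousWithinAt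
  have hmono : StrictMonoOn G (Ioo c b) :=
    strictMonoOn_of_hasDerivWithinAt_pos (convex_Ioo c b) hGc
      (fun w hw => (hG w (interior_subset hw)).hasDerivWithinAt)
      fun w hw => hG' w (interior_subset hw)
  obtain ⟨c', hcc', hc'a⟩ := exists_between hca
  set S := Ioo c' b
  have hSsub : S ⊆ Ioo c b := Ioo_subset_Ioo_left hcc'.le
  have hc' : c' ∈ Ioo c b := ⟨hcc', hc'a.trans hab⟩
  have hsurj : ∀ y, G c' < y → ∃ w ∈ S, G w = y := by
    intro y hy
    have hS : ∀ᶠ w in 𝓝[<] b, w ∈ S := Ioo_mem_nhdsLT (hc'a.trans hab)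
    obtain ⟨w, hwS, hyw⟩ := (hS.and (htop.eventually (eventually_gt_atTop y))).exists
    obtain ⟨x, hx, hxy⟩ := intermediate_value_Ioo hwS.1.le
      (hGc.mono (Icc_subset_Ioo hcc' hwS.2)) ⟨hy, hyw⟩
    exact ⟨x, ⟨hx.1, hx.2.trans hwS.2⟩, hxy⟩
  set v := Function.invFunOn G S
  have hv : ∀ y, G c' < y → v y ∈ S ∧ G (v y) = y := fun y hy =>
    ⟨Function.invFunOn_mem (hsurj y hy), Function.invFunOn_eq (hsurj y hy)⟩
  have hvG : ∀ w ∈ S, v (G w) = w := ((hmono.mono hSsub).injOn).leftInvOn_invFunOn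
  have hlt_iff : ∀ y, G c' < y → ∀ w ∈ S, w < v y ↔ G w < y := fun y hy w hw => by
    conv_rhs => rw [← (hv y hy).2]
    exact (hmono.lt_iff_lt (hSsub hw) (hSsub (hv y hy).1)).symm
  have hvmono : StrictMonoOn v (Ioi (G c')) := fun y₁ h₁ y₂ h₂ h₁₂ =>
    (hlt_iff y₂ h₂ _ (hv y₁ h₁).1).2 ((hv y₁ h₁).2.symm ▸ h₁₂)
  have himage : v '' Ioi (G c') = S :=
    MapsTo.image_subset (fun y hy => (hv y hy).1) |>.antisymm fun w hw =>
      ⟨G w, hmono hc' (hSsub hw) hw.1, hvG w hw⟩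
  have hGa : G c' < G a := hmono hc' ⟨hca, hab⟩ hc'a
  refine ⟨v, hvG a ⟨hc'a, hab⟩, fun y hy => ?_, ?_⟩
  · have hy' : G c' < y := hGa.trans_le hy
    have hcont : ContinuousAt v y := hvmono.continuousAt_of_image_mem_nhds (Ioi_mem_nhds hy')
      (himage ▸ isOpen_Ioo.mem_nhds (hv y hy').1)
    exact (hG _ (hSsub (hv y hy').1)).of_local_left_inverse hcont (hG' _ (hSsub (hv y hy').1)).ne'
      ((eventually_gt_nhds hy').mono fun z hz => (hv z hz).2)
  · refine tendsto_order.2 ⟨fun x hx => ?_, fun x hx => ?_⟩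
    · obtain ⟨w, hxw, hwb⟩ := exists_between (max_lt hx (hc'a.trans hab))
      have hw : w ∈ S := ⟨(le_max_right _ _).trans_lt hxw, hwb⟩
      filter_upwards [eventually_gt_atTop (G w)] with y hy
      have hy' : G c' < y := (hmono hc' (hSsub hw) hw.1).trans hy
      exact ((le_max_left _ _).trans_lt hxw).trans ((hlt_iff y hy' w hw).2 hy)
    · filter_upwards [eventually_gt_atTop (G c')] with y hy using (hv y hy).1.2.trans hx

theorem tendsto_atTop_of_hasDerivAt_inv {G g : ℝ → ℝ} {a b K : ℝ} (hab : a < b) (hK : 0 < K)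
    (hG : ∀ w ∈ Ico a b, HasDerivAt G (g w)⁻¹ w) (hpos : ∀ w ∈ Ico a b, 0 < g w)
    (hle : ∀ w ∈ Ico a b, g w ≤ K * (b - w)) : Tendsto G (𝓝[<] b) atTop := by
  set H := fun w => G w + K⁻¹ * Real.log (b - w)
  have hH : ∀ w ∈ Ico a b, HasDerivAt H ((g w)⁻¹ + K⁻¹ * (-1 / (b - w))) w := fun w hw =>
    (hG w hw).add ((((hasDerivAt_id w).const_sub b).log (sub_pos.2 hw.2).ne').const_mul K⁻¹)
  have hHmono : MonotoneOn H (Ico a b) := by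
    refine monotoneOn_of_hasDerivWithinAt_nonneg (convex_Ico a b)
      (fun w hw => (hH w hw).continuousAt.continuousWithinAt)
      (fun w hw => (hH w (interior_subset hw)).hasDerivWithinAt) fun w hw => ?_
    have hw := interior_subset hw
    have key : (K * (b - w))⁻¹ ≤ (g w)⁻¹ := inv_anti₀ (hpos w hw) (hle w hw)
    rw [mul_inv] at key
    rw [neg_div, one_div, mul_neg]
    linarith
  have hlog : Tendsto (fun w => H a + K⁻¹ * -Real.log (b - w)) (𝓝[<] b) atTop := by
    have hsub : Tendsto (fun w => b - w) (𝓝[<] b) (𝓝[>] 0) := by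
      simpa using ((continuous_sub_left b).continuousWithinAt (x := b)).tendsto_nhdsWithin
        (s := Iio b) (t := Ioi 0) fun w hw => sub_pos.2 hw
    exact tendsto_atTop_add_const_left _ _ <| Tendsto.const_mul_atTop (inv_pos.2 hK) <|
      tendsto_neg_atBot_atTop.comp (Real.tendsto_log_nhdsGT_zero.comp hsub)
  refine tendsto_atTop_mono' _ ?_ hlog
  filter_upwards [Ico_mem_nhdsLT hab] with w hw
  have := hHmono (left_mem_Ico.2 hab) hw hw.1
  simp only [H] at this ⊢
  linarith

theorem hasDerivAt_integral_of_continuousOn {F : ℝ → ℝ} {a b c : ℝ}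
    (hF : ContinuousOn F (Ioo c b)) (ha : a ∈ Ioo c b) {w : ℝ} (hw : w ∈ Ioo c b) :
    HasDerivAt (fun w => ∫ t in a..w, F t) (F w) w :=
  intervalIntegral.integral_hasDerivAt_right
    ((hF.mono ((ordConnected_Ioo).uIcc_subset ha hw)).intervalIntegrable)
    (hF.stronglyMeasurableAtFilter isOpen_Ioo w hw) (hF.continuousAt (isOpen_Ioo.mem_nhds hw))

theorem exists_hasDerivAt_tendsto_of_pos {g : ℝ → ℝ} {a b : ℝ} (hg : LocallyLipschitz g)
    (hab : a < b) (hb : g b = 0) (hpos : ∀ w ∈ Ico a b, 0 < g w) :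
    ∃ v : ℝ → ℝ, v 0 = a ∧ (∀ y, 0 ≤ y → HasDerivAt v (g (v y)) y) ∧
      Tendsto v atTop (𝓝 b) := by
  obtain ⟨c, hca, hc⟩ : ∃ c < a, Ioc c a ⊆ {w | 0 < g w} := exists_Ioc_subset_of_mem_nhds
    (hg.continuous.continuousAt.eventually (lt_mem_nhds (hpos a (left_mem_Ico.2 hab))))
    ⟨a - 1, sub_one_lt a⟩
  have hpos' : ∀ w ∈ Ioo c b, 0 < g w := fun w hw =>
    (le_or_gt w a).elim (fun h => hc ⟨hw.1, h⟩) fun h => hpos w ⟨h.le, hw.2⟩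
  obtain ⟨K, hK⟩ := hg.locallyLipschitzOn.exists_lipschitzOnWith_of_compact
    (isCompact_Icc : IsCompact (Icc a b))
  have hle : ∀ w ∈ Ico a b, g w ≤ (K + 1) * (b - w) := fun w hw => by
    have hbw : 0 < b - w := sub_pos.2 hw.2
    have := hK.dist_le_mul w (Ico_subset_Icc_self hw) b (right_mem_Icc.2 hab.le)
    rw [Real.dist_eq, Real.dist_eq, hb, sub_zero, abs_sub_comm, abs_of_pos hbw] at this
    calc g w ≤ K * (b - w) := (le_abs_self _).trans this
      _ ≤ (K + 1) * (b - w) := by gcongr; linarith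
  set G := fun w => ∫ t in a..w, (g t)⁻¹
  have hG : ∀ w ∈ Ioo c b, HasDerivAt G (g w)⁻¹ w := fun w hw =>
    hasDerivAt_integral_of_continuousOn
      (hg.continuous.continuousOn.inv₀ fun w hw => (hpos' w hw).ne') ⟨hca, hab⟩ hw
  have htop : Tendsto G (𝓝[<] b) atTop :=
    tendsto_atTop_of_hasDerivAt_inv hab (by positivity)
      (fun w hw => hG w (Ico_subset_Ioo_left hca hw)) hpos hle
  obtain ⟨v, hv0, hv, hvt⟩ :=
    exists_hasDerivAt_inverse hca hab hG (fun w hw => inv_pos.2 (hpos' w hw)) htop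
  have hGa : G a = 0 := intervalIntegral.integral_same
  rw [hGa] at hv0 hv
  exact ⟨v, hv0, fun y hy => by simpa using hv y hy, hvt⟩

section ViscousLayer

variable {f : ℝ → ℝ} {uB ℓ : ℝ}

theorem self_mem_viscousLayerSet (f : ℝ → ℝ) (uB : ℝ) : uB ∈ viscousLayerSet f uB :=
  ⟨fun _ => uB, rfl, fun y _ => by simpa using hasDerivAt_const y uB, tendsto_const_nhds⟩

theorem neg_mem_viscousLayerSet (h : ℓ ∈ viscousLayerSet f uB) :
    -ℓ ∈ viscousLayerSet (fun x => -f (-x)) (-uB) := by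
  obtain ⟨v, hv0, hv, hvt⟩ := h
  refine ⟨-v, by simp [hv0], fun y hy => (hv y hy).neg.congr_deriv ?_, hvt.neg⟩
  simp only [Pi.neg_apply, neg_neg]
  ring

theorem forall_lt_of_mem_viscousLayerSet (hf : LocallyLipschitz f)
    (hℓ : ℓ ∈ viscousLayerSet f uB) (h : uB < ℓ) : ∀ w ∈ Ico uB ℓ, f ℓ < f w := by
  obtain ⟨v, hv0, hv, hvt⟩ := hℓ
  have hg : LocallyLipschitz fun w => f w - f ℓ := hf.sub (.const _)
  have hne : ∀ w ∈ Ico uB ℓ, f w ≠ f ℓ := fun w hw hfw =>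
    hw.2.not_ge <| le_of_tendsto hvt <| (eventually_ge_atTop 0).mono fun y hy =>
      le_of_hasDerivAt_of_le hg hv (sub_eq_zero.2 hfw) (hv0 ▸ hw.1) hy
  by_contra! hcon
  obtain ⟨w₀, hw₀, hfw₀⟩ := hcon
  have hneg : ∀ w ∈ Ioo w₀ ℓ, f w - f ℓ < 0 := fun w hw => by
    by_contra! hge
    obtain ⟨x, hx, hfx⟩ := intermediate_value_Icc hw.1.le hf.continuous.continuousOn
      ⟨hfw₀, sub_nonneg.1 hge⟩
    exact hne x ⟨hw₀.1.trans hx.1, hx.2.trans_lt hw.2⟩ hfx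
  exact not_tendsto_of_lt_of_neg hv
    (fun y hy => lt_of_hasDerivAt_of_lt hg hv (sub_self _) (hv0 ▸ h) hy) hw₀.2 hneg hvt

theorem mem_viscousLayerSet_iff_of_lt (hf : LocallyLipschitz f) (h : uB < ℓ) :
    ℓ ∈ viscousLayerSet f uB ↔ ∀ w ∈ Ico uB ℓ, f ℓ < f w :=
  ⟨fun hℓ => forall_lt_of_mem_viscousLayerSet hf hℓ h, fun hpos =>
    exists_hasDerivAt_tendsto_of_pos (hf.sub (.const (f ℓ))) h (sub_self _)
      fun w hw => sub_pos.2 (hpos w hw)⟩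

theorem mem_viscousLayerSet_iff_of_gt (hf : LocallyLipschitz f) (h : ℓ < uB) :
    ℓ ∈ viscousLayerSet f uB ↔ ∀ w ∈ Ioc ℓ uB, f w < f ℓ := by
  have hf' : LocallyLipschitz fun x => -f (-x) :=
    (hf.comp LipschitzWith.id.neg.locallyLipschitz).neg
  have key := mem_viscousLayerSet_iff_of_lt hf' (neg_lt_neg h)
  constructor
  · intro hℓ w hw
    simpa using key.1 (neg_mem_viscousLayerSet hℓ) (-w) ⟨neg_le_neg hw.2, neg_lt_neg hw.1⟩
  · intro hneg
    simpa using neg_mem_viscousLayerSet <| key.2 fun w hw => by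
      simpa using hneg (-w) ⟨lt_neg.1 hw.2, neg_le.1 hw.1⟩

end ViscousLayer

section Unimodal

variable {f : ℝ → ℝ} {u uB : ℝ}

theorem viscousLayerSet_eq_Iic_of_le (hf : LocallyLipschitz f) (hanti : StrictAntiOn f (Iic u))
    (hmono : StrictMonoOn f (Ici u)) (huB : uB ≤ u) : viscousLayerSet f uB = Iic u := by
  ext ℓ
  rcases lt_trichotomy uB ℓ with h | rfl | h
  · rw [mem_viscousLayerSet_iff_of_lt hf h, mem_Iic]
    refine ⟨fun hlt => ?_, fun hℓ w hw => hanti (hw.2.le.trans hℓ) hℓ hw.2⟩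
    by_contra! hℓ
    exact (hlt u ⟨huB, hℓ⟩).not_ge (hmono.monotoneOn (mem_Ici.2 le_rfl) hℓ.le hℓ.le)
  · simp [self_mem_viscousLayerSet, huB]
  · rw [mem_viscousLayerSet_iff_of_gt hf h, mem_Iic]
    exact iff_of_true (fun w hw => hanti (h.le.trans huB) (hw.2.trans huB) hw.1) (h.le.trans huB)

theorem viscousLayerSet_eq_Iio_union_of_lt (hf : LocallyLipschitz f)
    (hanti : StrictAntiOn f (Iic u)) (hmono : StrictMonoOn f (Ici u)) (huB : u < uB) {s : ℝ}
    (hs : s < u) (hfs : f s = f uB) : viscousLayerSet f uB = Iio s ∪ {uB} := by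
  ext ℓ
  rw [mem_union, mem_Iio, mem_singleton_iff]
  rcases lt_trichotomy uB ℓ with h | rfl | h
  · rw [mem_viscousLayerSet_iff_of_lt hf h]
    refine iff_of_false (fun hlt => (hlt uB ⟨le_rfl, h⟩).not_gt ?_) ?_
    · exact hmono (mem_Ici.2 huB.le) (mem_Ici.2 (huB.trans h).le) h
    · rintro (hℓ | hℓ) <;> linarith
  · simp [self_mem_viscousLayerSet]
  · rw [mem_viscousLayerSet_iff_of_gt hf h, or_iff_left h.ne]
    constructor
    · intro hlt
      by_contra! hsℓ
      refine (hlt uB ⟨h, le_rfl⟩).not_ge ?_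
      rcases le_or_gt ℓ u with hℓu | hℓu
      · exact hfs ▸ hanti.antitoneOn (mem_Iic.2 hs.le) hℓu hsℓ
      · exact (hmono hℓu.le huB.le h).le
    · intro hℓ w hw
      rcases le_or_gt w u with hwu | hwu
      · exact hanti (mem_Iic.2 (hℓ.trans hs).le) hwu hw.1
      · calc f w ≤ f uB := hmono.monotoneOn hwu.le huB.le hw.2
          _ = f s := hfs.symm
          _ < f ℓ := hanti (mem_Iic.2 (hℓ.trans hs).le) (mem_Iic.2 hs.le) hℓ

end Unimodal

theorem viscousLayerSet_eq_convex
    (f : ℝ → ℝ) (hf : ContDiff ℝ 2 f) (hf'' : ∀ u, 0 < deriv (deriv f) u)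
    (ustar : ℝ) (hstar : deriv f ustar = 0) (uB : ℝ) :
    (uB ≤ ustar → viscousLayerSet f uB = Set.Iic ustar) ∧
    (ustar < uB → ∀ uBstar : ℝ, uBstar < ustar → f uBstar = f uB →
      viscousLayerSet f uB = Set.Iio uBstar ∪ {uB}) := by
  have hf' : StrictMono (deriv f) := strictMono_of_deriv_pos hf''
  have hanti : StrictAntiOn f (Iic ustar) :=
    strictAntiOn_of_deriv_neg (convex_Iic _) hf.continuous.continuousOn fun x hx => by
      rw [interior_Iic] at hx
      exact hstar ▸ hf' hx
  have hmono : StrictMonoOn f (Ici ustar) :=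
    strictMonoOn_of_deriv_pos (convex_Ici _) hf.continuous.continuousOn fun x hx => by
      rw [interior_Ici] at hx
      exact hstar ▸ hf' hx
  have hlip : LocallyLipschitz f := (hf.of_le one_le_two).locallyLipschitz
  exact ⟨viscousLayerSet_eq_Iic_of_le hlip hanti hmono,
    fun huB _ hs hfs => viscousLayerSet_eq_Iio_union_of_lt hlip hanti hmono huB hs hfs⟩
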